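/- Variational lower bound on mutual information (discrete Barber–Agakov bound, equation (6) of the paper): let 𝒴 and 𝒵 be finite sets, let p be a joint probability mass function on 𝒴 × 𝒵 with marginals p_Y and p_Z, and let q be any conditional probability mass function, i.e. q(·|z) is a probability mass function on 𝒴 for each z ∈ 𝒵, with q(y|z) > 0 whenever p(y,z) > 0. Then I(Y;Z) ≥ Σ_{(y,z): p(y,z) > 0} p(y,z)·log q(y|z) + H(Y), where I(Y;Z) = Σ_{(y,z): p(y,z) > 0} p(y,z)·log( p(y,z)/(p_Y(y)·p_Z(z)) ) and H(Y) = −Σ_{y: p_Y(y) > 0} p_Y(y)·log p_Y(y). -/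

import Mathlib

/-!
Since `p_Z(z) q(y|z)` is a measure on `𝒴 × 𝒵` with the same total mass as `p`, Gibbs' inequality
gives `Σ p log (p / (p_Z q)) ≥ 0`; and expanding the logarithms,
`I(Y;Z) = Σ p log q + H(Y) + Σ p log (p / (p_Z q))`.
On the zero set of `p` every summand `p · log _` vanishes, so the restrictions to positive mass
can be dropped.
-/

open Real Finset

lemma ite_pos_mul_eq_mul {x : ℝ} (hx : 0 ≤ x) (a : ℝ) :
    (if 0 < x then x * a else 0) = x * a := by
  rcases hx.lt_or_eq with hx | rfl <;> simp [*]

lemma sub_le_mul_log_div {x y : ℝ} (hx : 0 ≤ x) (hy : 0 ≤ y) (hxy : 0 < x → 0 < y) :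
    x - y ≤ x * log (x / y) := by
  rcases hx.lt_or_eq with hx | rfl
  · have h := mul_le_mul_of_nonneg_left
      (one_sub_inv_le_log_of_pos (div_pos hx (hxy hx))) hx.le
    rwa [inv_div, mul_sub, mul_one, mul_div_cancel₀ _ hx.ne'] at h
  · simpa using hy

lemma sum_sub_sum_le_sum_mul_log_div {ι : Type*} (s : Finset ι) {p r : ι → ℝ}
    (hp : ∀ i ∈ s, 0 ≤ p i) (hr : ∀ i ∈ s, 0 ≤ r i) (hpr : ∀ i ∈ s, 0 < p i → 0 < r i) :
    ∑ i ∈ s, p i - ∑ i ∈ s, r i ≤ ∑ i ∈ s, p i * log (p i / r i) := by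
  rw [← sum_sub_distrib]
  exact sum_le_sum fun i hi => sub_le_mul_log_div (hp i hi) (hr i hi) (hpr i hi)

lemma mul_log_div_mul_eq {x a b c : ℝ} (h : x ≠ 0 → a ≠ 0 ∧ b ≠ 0 ∧ c ≠ 0) :
    x * log (x / (a * b)) = x * log c - x * log a + x * log (x / (b * c)) := by
  rcases eq_or_ne x 0 with rfl | hx
  · simp
  obtain ⟨ha, hb, hc⟩ := h hx
  rw [log_div hx (mul_ne_zero ha hb), log_div hx (mul_ne_zero hb hc), log_mul ha hb,
    log_mul hb hc]
  ring

lemma sum_sum_mul_log_div_marginal_mul_nonneg {𝒴 𝒵 : Type*} [Fintype 𝒴] [Fintype 𝒵]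
    {p : 𝒴 → 𝒵 → ℝ} (hp0 : ∀ y z, 0 ≤ p y z)
    {pZ : 𝒵 → ℝ} (hpZ : ∀ z, pZ z = ∑ y : 𝒴, p y z)
    {q : 𝒴 → 𝒵 → ℝ} (hq0 : ∀ y z, 0 ≤ q y z) (hq1 : ∀ z : 𝒵, ∑ y : 𝒴, q y z = 1)
    (hqpos : ∀ y z, 0 < p y z → 0 < q y z) :
    0 ≤ ∑ y, ∑ z, p y z * log (p y z / (pZ z * q y z)) := by
  have hpZ0 (z) : 0 ≤ pZ z := hpZ z ▸ sum_nonneg fun y _ => hp0 y z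
  have hpZpos {y z} (h : 0 < p y z) : 0 < pZ z :=
    hpZ z ▸ sum_pos' (fun y _ => hp0 y z) ⟨y, mem_univ y, h⟩
  have hmass : ∑ y, ∑ z, pZ z * q y z = ∑ y, ∑ z, p y z := by
    rw [sum_comm, sum_comm (f := p)]
    simp_rw [← mul_sum, hq1, mul_one, hpZ]
  have hgibbs := sum_sub_sum_le_sum_mul_log_div (univ ×ˢ univ)
    (p := fun x : 𝒴 × 𝒵 => p x.1 x.2) (r := fun x => pZ x.2 * q x.1 x.2)
    (fun x _ => hp0 _ _) (fun x _ => mul_nonneg (hpZ0 _) (hq0 _ _))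
    (fun x _ h => mul_pos (hpZpos h) (hqpos _ _ h))
  simpa only [sum_product, hmass, sub_self] using hgibbs

theorem barber_agakov_bound_general {𝒴 𝒵 : Type*} [Fintype 𝒴] [Fintype 𝒵]
    (p : 𝒴 → 𝒵 → ℝ)
    (hp0 : ∀ y z, 0 ≤ p y z)
    (pY : 𝒴 → ℝ) (hpY : ∀ y, pY y = ∑ z : 𝒵, p y z)
    (pZ : 𝒵 → ℝ) (hpZ : ∀ z, pZ z = ∑ y : 𝒴, p y z)
    (q : 𝒴 → 𝒵 → ℝ)
    (hq0 : ∀ y z, 0 ≤ q y z)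
    (hq1 : ∀ z : 𝒵, ∑ y : 𝒴, q y z = 1)
    (hqpos : ∀ y z, 0 < p y z → 0 < q y z) :
    (∑ y : 𝒴, ∑ z : 𝒵, if 0 < p y z then p y z * Real.log (p y z / (pY y * pZ z)) else 0)
      ≥ (∑ y : 𝒴, ∑ z : 𝒵, if 0 < p y z then p y z * Real.log (q y z) else 0)
        + (- ∑ y : 𝒴, if 0 < pY y then pY y * Real.log (pY y) else 0) := by
  have hpY0 (y) : 0 ≤ pY y := hpY y ▸ sum_nonneg fun z _ => hp0 y z
  have hentropy : ∑ y, pY y * log (pY y) = ∑ y, ∑ z, p y z * log (pY y) :=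
    sum_congr rfl fun y _ => by rw [← sum_mul, ← hpY]
  have hsplit (y z) := mul_log_div_mul_eq (x := p y z) (a := pY y) (b := pZ z) (c := q y z)
    fun h => have h := (hp0 y z).lt_of_ne' h
      ⟨(hpY y ▸ sum_pos' (fun z _ => hp0 y z) ⟨z, mem_univ z, h⟩).ne',
        (hpZ z ▸ sum_pos' (fun y _ => hp0 y z) ⟨y, mem_univ y, h⟩).ne', (hqpos y z h).ne'⟩
  have hgap := sum_sum_mul_log_div_marginal_mul_nonneg hp0 hpZ hq0 hq1 hqpos
  simp only [ite_pos_mul_eq_mul (hp0 _ _), ite_pos_mul_eq_mul (hpY0 _)]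
  simp only [hentropy, hsplit, sum_add_distrib, sum_sub_distrib]
  linarith

/-- Variational lower bound on mutual information (discrete Barber–Agakov bound, equation (6)
of the paper): for a joint pmf `p` on finite sets `𝒴 × 𝒵` with marginals `p_Y, p_Z` and any
conditional pmf `q` with `q(y|z) > 0` whenever `p(y,z) > 0`,
`I(Y;Z) ≥ Σ_{p(y,z)>0} p(y,z)·log q(y|z) + H(Y)`. -/
theorem barber_agakov_bound {𝒴 𝒵 : Type*} [Fintype 𝒴] [Fintype 𝒵]
    (p : 𝒴 → 𝒵 → ℝ)
    (hp0 : ∀ y z, 0 ≤ p y z)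
    (hp1 : ∑ y : 𝒴, ∑ z : 𝒵, p y z = 1)
    (pY : 𝒴 → ℝ) (hpY : ∀ y, pY y = ∑ z : 𝒵, p y z)
    (pZ : 𝒵 → ℝ) (hpZ : ∀ z, pZ z = ∑ y : 𝒴, p y z)
    (q : 𝒴 → 𝒵 → ℝ)
    (hq0 : ∀ y z, 0 ≤ q y z)
    (hq1 : ∀ z : 𝒵, ∑ y : 𝒴, q y z = 1)
    (hqpos : ∀ y z, 0 < p y z → 0 < q y z) :
    (∑ y : 𝒴, ∑ z : 𝒵, if 0 < p y z then p y z * Real.log (p y z / (pY y * pZ z)) else 0)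
      ≥ (∑ y : 𝒴, ∑ z : 𝒵, if 0 < p y z then p y z * Real.log (q y z) else 0)
        + (- ∑ y : 𝒴, if 0 < pY y then pY y * Real.log (pY y) else 0) :=
  barber_agakov_bound_general p hp0 pY hpY pZ hpZ q hq0 hq1 hqpos
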